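/- arXiv:2511.22391 — 4 statements merged into one kernel-verified Lean document; each statement's English description precedes it below -/
import Mathlib

section
/- For any simplicial model C, C is isomorphic to SC(LEM(C)); explicitly, the map sending each vertex v of C to (χ(v), {F∈F(C) | v∈F}) is an isomorphism of simplicial models from C to SC(LEM(C)). -/
namespace SimplicialEpistemic

/-! ## Syntax -/

inductive Formula (Ag Xv Pr : Type) : Type
  | atom : Pr → Xv → Formula Ag Xv Pr
  | top : Formula Ag Xv Pr
  | neg : Formula Ag Xv Pr → Formula Ag Xv Pr
  | and : Formula Ag Xv Pr → Formula Ag Xv Pr → Formula Ag Xv Pr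
  | assign : Xv → Ag → Formula Ag Xv Pr → Formula Ag Xv Pr
  | know : Finset Xv → Formula Ag Xv Pr → Formula Ag Xv Pr

namespace Formula

variable {Ag Xv Pr : Type} [DecidableEq Xv]

/-- Free variables of a formula. -/
def FV : Formula Ag Xv Pr → Finset Xv
  | .atom _ x => {x}
  | .top => ∅
  | .neg φ => FV φ
  | .and φ ψ => FV φ ∪ FV ψ
  | .assign x _ φ => FV φ \ {x}
  | .know Xs _ => Xs

/-- Well-formedness: in `K_X α`, the formula `α` must have no free variables.
The language `L` consists of the well-formed formulas. -/
def Wf : Formula Ag Xv Pr → Prop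
  | .atom _ _ => True
  | .top => True
  | .neg φ => Wf φ
  | .and φ ψ => Wf φ ∧ Wf ψ
  | .assign _ _ φ => Wf φ
  | .know _ α => Wf α ∧ FV α = ∅

/-- A sentence is a well-formed formula with no free variables. -/
def Sent (φ : Formula Ag Xv Pr) : Prop := Wf φ ∧ FV φ = ∅

/-- Implication `φ → ψ`, defined as `¬(φ ∧ ¬ψ)`. -/
def impl (φ ψ : Formula Ag Xv Pr) : Formula Ag Xv Pr := .neg (.and φ (.neg ψ))

/-- Biconditional `φ ↔ ψ`. -/
def fiff (φ ψ : Formula Ag Xv Pr) : Formula Ag Xv Pr := .and (impl φ ψ) (impl ψ φ)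

/-- Disjunction `φ ∨ ψ`, defined as `¬(¬φ ∧ ¬ψ)`. -/
def fdisj (φ ψ : Formula Ag Xv Pr) : Formula Ag Xv Pr := .neg (.and (.neg φ) (.neg ψ))

/-- Falsum `⊥ := ¬⊤`. -/
def fbot : Formula Ag Xv Pr := .neg .top

/-- The dual assignment operator `⟨x:=a⟩φ := ¬[x:=a]¬φ`. -/
def dia (x : Xv) (a : Ag) (φ : Formula Ag Xv Pr) : Formula Ag Xv Pr :=
  .neg (.assign x a (.neg φ))

/-- Finite conjunction of a list of formulas. -/
def bigAnd : List (Formula Ag Xv Pr) → Formula Ag Xv Pr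
  | [] => .top
  | φ :: l => .and φ (bigAnd l)

/-- Iterated assignment `[x⃗:=a⃗]φ`. -/
def assigns : List Xv → List Ag → Formula Ag Xv Pr → Formula Ag Xv Pr
  | x :: xs, a :: as, φ => .assign x a (assigns xs as φ)
  | _, _, φ => φ

/-- Substitution `φ[y/x]` of `y` for all free occurrences of `x` in `φ`. -/
def subst (x y : Xv) : Formula Ag Xv Pr → Formula Ag Xv Pr
  | .atom p z => .atom p (if z = x then y else z)
  | .top => .top
  | .neg φ => .neg (subst x y φ)
  | .and φ ψ => .and (subst x y φ) (subst x y ψ)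
  | .assign z a φ => if z = x then .assign z a φ else .assign z a (subst x y φ)
  | .know Xs α => .know (Xs.image fun z => if z = x then y else z) α

/-- Admissibility of `φ[y/x]`: `x` has no free occurrence in `φ` within the scope
of `[y:=b]` for any `b`. -/
def Adm (x y : Xv) : Formula Ag Xv Pr → Prop
  | .atom _ _ => True
  | .top => True
  | .neg φ => Adm x y φ
  | .and φ ψ => Adm x y φ ∧ Adm x y ψ
  | .assign z _ φ => z = x ∨ x ∉ FV φ ∨ (z ≠ y ∧ Adm x y φ)
  | .know _ _ => True

/-- `occurs y φ`: the variable `y` occurs (free or bound) in `φ`. -/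
def occurs (y : Xv) : Formula Ag Xv Pr → Prop
  | .atom _ z => z = y
  | .top => False
  | .neg φ => occurs y φ
  | .and φ ψ => occurs y φ ∨ occurs y ψ
  | .assign z _ φ => z = y ∨ occurs y φ
  | .know Xs α => y ∈ Xs ∨ occurs y α

/-- Propositional evaluation, treating atoms, assignment formulas and knowledge
formulas as propositional atoms. -/
def propEval (v : Formula Ag Xv Pr → Bool) : Formula Ag Xv Pr → Bool
  | .atom p x => v (.atom p x)
  | .top => true
  | .neg φ => !(propEval v φ)
  | .and φ ψ => propEval v φ && propEval v ψ
  | .assign x a φ => v (.assign x a φ)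
  | .know Xs α => v (.know Xs α)

/-- `φ` is a propositional tautology. -/
def Tautology (φ : Formula Ag Xv Pr) : Prop := ∀ v, propEval v φ = true

end Formula

/-! ## Simplicial models and their semantics -/

structure SimpModel (Ag Pr : Type) : Type 1 where
  V : Type
  faces : Set (Set V)
  χ : V → Ag
  ℓ : Pr → Set V

namespace SimpModel

variable {Ag Pr : Type}

/-- The facets: faces contained in no other face. -/
def facets (C : SimpModel Ag Pr) : Set (Set C.V) :=
  {F | F ∈ C.faces ∧ ∀ G ∈ C.faces, F ⊆ G → F = G}

/-- The conditions for being a genuine simplicial model. -/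
def IsModel (C : SimpModel Ag Pr) : Prop :=
  Nonempty C.V ∧ (∅ : Set C.V) ∉ C.faces ∧
    (∀ Y F : Set C.V, Y.Nonempty → Y ⊆ F → F ∈ C.faces → Y ∈ C.faces) ∧
    (∀ v : C.V, {v} ∈ C.faces) ∧
    (∀ F ∈ C.faces, Set.InjOn C.χ F)

end SimpModel

/-! ## First-order Kripke models and their semantics -/

structure KModel (Ag Pr : Type) : Type 1 where
  W : Type
  δ : W → Set Ag
  R : Ag → W → W → Prop
  ρ : Pr → W → Set Ag

namespace KModel

variable {Ag Pr : Type}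

/-- The conditions for being a genuine first-order Kripke model. -/
def IsModel (M : KModel Ag Pr) : Prop :=
  Nonempty M.W ∧ (∀ w : M.W, (M.δ w).Nonempty) ∧
    (∀ (a : Ag) (w v : M.W), M.R a w v → a ∈ M.δ w) ∧
    (∀ (p : Pr) (w : M.W), M.ρ p w ⊆ M.δ w)

end KModel

variable {Ag Xv Pr : Type}

/-- Simplicial satisfaction `C, F, σ ⊩ φ`. -/
def SSat [DecidableEq Xv] (C : SimpModel Ag Pr) :
    Formula Ag Xv Pr → Set C.V → (Xv → Ag) → Prop
  | .atom p x, F, σ => σ x ∈ C.χ '' (F ∩ C.ℓ p)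
  | .top, _, _ => True
  | .neg φ, F, σ => ¬ SSat C φ F σ
  | .and φ ψ, F, σ => SSat C φ F σ ∧ SSat C ψ F σ
  | .assign x a φ, F, σ => a ∈ C.χ '' F → SSat C φ F (Function.update σ x a)
  | .know Xs α, F, σ =>
      ∀ G ∈ C.facets, (∀ x ∈ Xs, σ x ∈ C.χ '' (F ∩ G)) → SSat C α G σ

/-- Kripke satisfaction `M, w, σ ⊨ φ`. -/
def KSat [DecidableEq Xv] (M : KModel Ag Pr) :
    Formula Ag Xv Pr → M.W → (Xv → Ag) → Prop
  | .atom p x, w, σ => σ x ∈ M.ρ p w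
  | .top, _, _ => True
  | .neg φ, w, σ => ¬ KSat M φ w σ
  | .and φ ψ, w, σ => KSat M φ w σ ∧ KSat M ψ w σ
  | .assign x a φ, w, σ => a ∈ M.δ w → KSat M φ w (Function.update σ x a)
  | .know Xs α, w, σ => ∀ v : M.W, (∀ x ∈ Xs, M.R (σ x) w v) → KSat M α v σ

/-! ## Bisimulations -/

/-- Bisimulation between simplicial models. -/
def IsSBisim (C D : SimpModel Ag Pr) (Z : Set (Set C.V × Set D.V)) : Prop :=
  (∀ q ∈ Z, q.1 ∈ C.facets ∧ q.2 ∈ D.facets) ∧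
    ∀ F G, (F, G) ∈ Z →
      (C.χ '' F = D.χ '' G ∧ ∀ p : Pr, C.χ '' (F ∩ C.ℓ p) = D.χ '' (G ∩ D.ℓ p)) ∧
      (∀ (As : Set Ag) (F' : Set C.V), F' ∈ C.facets → As ⊆ C.χ '' (F ∩ F') →
        ∃ G' ∈ D.facets, As ⊆ D.χ '' (G ∩ G') ∧ (F', G') ∈ Z) ∧
      (∀ (As : Set Ag) (G' : Set D.V), G' ∈ D.facets → As ⊆ D.χ '' (G ∩ G') →
        ∃ F' ∈ C.facets, As ⊆ C.χ '' (F ∩ F') ∧ (F', G') ∈ Z)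

/-- Bisimulation between first-order Kripke models. -/
def IsKBisim (M N : KModel Ag Pr) (Z : Set (M.W × N.W)) : Prop :=
  ∀ w v, (w, v) ∈ Z →
    (M.δ w = N.δ v ∧ ∀ p : Pr, M.ρ p w = N.ρ p v) ∧
    (∀ (As : Set Ag) (w' : M.W), (∀ a ∈ As, M.R a w w') →
      ∃ v' : N.W, (∀ a ∈ As, N.R a v v') ∧ (w', v') ∈ Z) ∧
    (∀ (As : Set Ag) (v' : N.W), (∀ a ∈ As, N.R a v v') →
      ∃ w' : M.W, (∀ a ∈ As, M.R a w w') ∧ (w', v') ∈ Z)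

/-! ## Local epistemic models -/

/-- (Local S5): the restriction of `R_a` to `{w | a ∈ δ(w)}` is an equivalence relation. -/
def LocalS5 (M : KModel Ag Pr) : Prop :=
  ∀ a : Ag, Equivalence (fun w v : {w : M.W // a ∈ M.δ w} => M.R a w.1 v.1)

/-- (Individually Increasing Domain). -/
def IndInc (M : KModel Ag Pr) : Prop :=
  ∀ (a : Ag) (w v : M.W), a ∈ M.δ w → M.R a w v → a ∈ M.δ v

/-- (Local Predicates). -/
def LocalPred (M : KModel Ag Pr) : Prop :=
  ∀ (p : Pr) (a : Ag) (w v : M.W), a ∈ M.ρ p w → M.R a w v → a ∈ M.ρ p v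

/-- (Collectively Decreasing Domain). -/
def CollDec (M : KModel Ag Pr) : Prop :=
  ∀ w v : M.W, (∀ a ∈ M.δ w, M.R a w v) → M.δ v ⊆ M.δ w

/-- A local epistemic model. -/
def IsLEM (M : KModel Ag Pr) : Prop :=
  LocalS5 M ∧ IndInc M ∧ LocalPred M ∧ CollDec M

/-- (Properness): `⋂_{a ∈ δ(w)} R_a(w) = {w}` for every `w`. -/
def Proper (M : KModel Ag Pr) : Prop :=
  ∀ w : M.W, {v : M.W | ∀ a ∈ M.δ w, M.R a w v} = {w}

/-! ## Properization -/

/-- `[w]_δ = ⋂_{a ∈ δ(w)} R_a(w)`. -/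
def cell (M : KModel Ag Pr) (w : M.W) : Set M.W := {v | ∀ a ∈ M.δ w, M.R a w v}

/-- The properization `M^pr` of a Kripke model. -/
noncomputable def properize (M : KModel Ag Pr) : KModel Ag Pr where
  W := {S : Set M.W // ∃ w : M.W, S = cell M w}
  δ := fun S => M.δ S.2.choose
  R := fun a S T => ∃ w v : M.W, S.1 = cell M w ∧ T.1 = cell M v ∧ M.R a w v
  ρ := fun p S => M.ρ p S.2.choose

/-! ## The maps LEM and SC -/

/-- `LEM(C)`: the first-order Kripke model associated to a simplicial model. -/
def LEMof (C : SimpModel Ag Pr) : KModel Ag Pr where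
  W := {F : Set C.V // F ∈ C.facets}
  δ := fun F => C.χ '' F.1
  R := fun a F G => a ∈ C.χ '' (F.1 ∩ G.1)
  ρ := fun p F => C.χ '' (F.1 ∩ C.ℓ p)

/-- Vertices of `SC(M)`: pairs `(a, [w]_a)` with `a ∈ δ(w)`, `[w]_a = R_a(w)`. -/
abbrev SCVert (M : KModel Ag Pr) : Type :=
  {u : Ag × Set M.W // ∃ w : M.W, u.1 ∈ M.δ w ∧ u.2 = {v : M.W | M.R u.1 w v}}

/-- `F^M_w = {(a, [w]_a) | a ∈ δ(w)}`. -/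
def SCface (M : KModel Ag Pr) (w : M.W) : Set (SCVert M) :=
  {u | u.1.1 ∈ M.δ w ∧ u.1.2 = {v : M.W | M.R u.1.1 w v}}

/-- `SC(M)`: the simplicial model associated to a Kripke model. -/
def SCof (M : KModel Ag Pr) : SimpModel Ag Pr where
  V := SCVert M
  faces := {F : Set (SCVert M) | F.Nonempty ∧ ∃ w : M.W, F ⊆ SCface M w}
  χ := fun u => u.1.1
  ℓ := fun p => {u | ∃ w : M.W, u.1.1 ∈ M.ρ p w ∧ u.1.2 = {v : M.W | M.R u.1.1 w v}}

/-! ## Isomorphisms -/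

/-- Isomorphism of first-order Kripke models. -/
structure KIso (M N : KModel Ag Pr) where
  toEquiv : M.W ≃ N.W
  δ_eq : ∀ w : M.W, N.δ (toEquiv w) = M.δ w
  R_iff : ∀ (a : Ag) (w v : M.W), N.R a (toEquiv w) (toEquiv v) ↔ M.R a w v
  ρ_eq : ∀ (p : Pr) (w : M.W), N.ρ p (toEquiv w) = M.ρ p w

/-- Isomorphism of simplicial models. -/
structure SIso (C D : SimpModel Ag Pr) where
  toEquiv : C.V ≃ D.V
  face_iff : ∀ F : Set C.V, F ∈ C.faces ↔ (toEquiv '' F) ∈ D.faces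
  χ_eq : ∀ v : C.V, D.χ (toEquiv v) = C.χ v
  ℓ_iff : ∀ (p : Pr) (v : C.V), toEquiv v ∈ D.ℓ p ↔ v ∈ C.ℓ p

/-! ## The proof system LEL -/

/-- The axiom system `LEL` (over the well-formed fragment of the language). -/
inductive LEL [DecidableEq Xv] : Formula Ag Xv Pr → Prop
  | taut {φ} : Formula.Wf φ → Formula.Tautology φ → LEL φ
  | kk {Xs : Finset Xv} {α β} : Formula.Sent α → Formula.Sent β →
      LEL (Formula.impl (.know Xs (Formula.impl α β))
        (Formula.impl (.know Xs α) (.know Xs β)))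
  | mono {Xs Ys : Finset Xv} {α} : Xs ⊆ Ys → Formula.Sent α →
      LEL (Formula.impl (.know Xs α) (.know Ys α))
  | kasgn {x : Xv} {a : Ag} {φ ψ} : Formula.Wf φ → Formula.Wf ψ →
      LEL (Formula.impl (.assign x a (Formula.impl φ ψ))
        (Formula.impl (.assign x a φ) (.assign x a ψ)))
  | det {x : Xv} {a : Ag} {φ} : Formula.Wf φ →
      LEL (Formula.impl (Formula.dia x a φ) (.assign x a φ))
  | tr {x : Xv} {a : Ag} {φ} : Formula.Wf φ → x ∉ Formula.FV φ →
      LEL (Formula.impl φ (.assign x a φ))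
  | sub {x y : Xv} {a : Ag} {φ} : Formula.Wf φ → Formula.Adm x y φ →
      LEL (.assign y a (Formula.impl (.assign x a φ) (Formula.subst x y φ)))
  | com {x y : Xv} {a b : Ag} {φ} : Formula.Wf φ → x ≠ y →
      LEL (Formula.impl (.assign x a (.assign y b φ)) (.assign y b (.assign x a φ)))
  | ui {x : Xv} {φ} (l : List Ag) : Formula.Wf φ → l.Nodup → (∀ a : Ag, a ∈ l) →
      LEL (Formula.impl (Formula.bigAnd (l.map fun a => .assign x a φ)) φ)
  | tK {Xs : Finset Xv} {α} : Formula.Sent α → LEL (Formula.impl (.know Xs α) α)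
  | kni {xs : List Xv} {as : List Ag} {α} :
      Formula.Sent α → xs.Nodup → xs.length = as.length →
      LEL (Formula.assigns xs as (Formula.impl (.neg (.know xs.toFinset α))
        (.know xs.toFinset (Formula.assigns xs as (.neg (.know xs.toFinset α))))))
  | epi {x : Xv} {a : Ag} : LEL (.assign x a (.know {x} (Formula.dia x a .top)))
  | api {x : Xv} {a : Ag} {p : Pr} :
      LEL (.assign x a (Formula.impl (.atom p x) (.know {x} (.assign x a (.atom p x)))))
  | eni {xs : List Xv} {as : List Ag} {z : Xv} (l : List Ag) :
      xs.Nodup → xs.length = as.length → l.Nodup → (∀ b : Ag, b ∈ l ↔ b ∉ as) →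
      LEL (Formula.assigns xs as
        (Formula.impl (Formula.bigAnd (l.map fun b => .assign z b Formula.fbot))
          (.know xs.toFinset (Formula.bigAnd (l.map fun b => .assign z b Formula.fbot)))))
  | mp {φ ψ} : LEL (Formula.impl φ ψ) → LEL φ → LEL ψ
  | necK {α} : Formula.Sent α → LEL α → LEL (.know ∅ α)
  | necA {x : Xv} {a : Ag} {φ} : LEL φ → LEL (.assign x a φ)

/-- `Γ` is consistent in `LEL`: no finite subset has a provably false conjunction. -/
def Consistent [DecidableEq Xv] (Γ : Set (Formula Ag Xv Pr)) : Prop :=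
  ¬ ∃ l : List (Formula Ag Xv Pr), (∀ φ ∈ l, φ ∈ Γ) ∧ LEL (.neg (Formula.bigAnd l))

end SimplicialEpistemic

namespace SimplicialEpistemic

section Aux

variable {Ag Pr : Type} [Fintype Ag] (C : SimpModel Ag Pr)

lemma aux_face_finite (hC : C.IsModel) {F : Set C.V} (hF : F ∈ C.faces) : F.Finite :=
  Set.Finite.of_finite_image (Set.toFinite _) (hC.2.2.2.2 F hF)

lemma aux_face_ncard (hC : C.IsModel) {F : Set C.V} (hF : F ∈ C.faces) :
    F.ncard ≤ Fintype.card Ag := by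
  rw [← Set.ncard_image_of_injOn (hC.2.2.2.2 F hF)]
  simpa [Set.ncard_univ, Nat.card_eq_fintype_card] using
    Set.ncard_le_ncard (Set.subset_univ (C.χ '' F)) Set.finite_univ

lemma aux_exists_facet (hC : C.IsModel) {F : Set C.V} (hF : F ∈ C.faces) :
    ∃ G ∈ C.facets, F ⊆ G := by
  classical
  set B := Fintype.card Ag with hB
  set P : ℕ → Prop := fun n => ∃ G ∈ C.faces, F ⊆ G ∧ G.ncard = n with hPdef
  have hP : P F.ncard := ⟨F, hF, subset_rfl, rfl⟩
  have hle : F.ncard ≤ B := aux_face_ncard C hC hF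
  obtain ⟨G, hG, hFG, hcard⟩ := Nat.findGreatest_spec hle hP
  refine ⟨G, ⟨hG, ?_⟩, hFG⟩
  intro H hH hGH
  by_contra hne
  have h1 : G.ncard < H.ncard :=
    Set.ncard_lt_ncard (ssubset_of_subset_of_ne hGH hne) (aux_face_finite C hC hH)
  have h2 : ¬ P H.ncard :=
    Nat.findGreatest_is_greatest (hcard ▸ h1) (aux_face_ncard C hC hH)
  exact h2 ⟨H, hH, hFG.trans hGH, rfl⟩

lemma aux_star (hC : C.IsModel) (v : C.V) (F₀ : (LEMof C).W) (hv : v ∈ F₀.1) :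
    {G : (LEMof C).W | v ∈ G.1} = {G : (LEMof C).W | C.χ v ∈ C.χ '' (F₀.1 ∩ G.1)} := by
  ext G
  constructor
  · intro h
    exact ⟨v, ⟨hv, h⟩, rfl⟩
  · rintro ⟨u, ⟨hu1, hu2⟩, hχ⟩
    have : u = v := hC.2.2.2.2 F₀.1 F₀.2.1 hu1 hv hχ
    exact this ▸ hu2

/-- The map `v ↦ (χ(v), {F ∈ F(C) | v ∈ F})`. -/
noncomputable def auxMap (hC : C.IsModel) (v : C.V) : SCVert (LEMof C) :=
  ⟨(C.χ v, {F : (LEMof C).W | v ∈ F.1}), by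
    obtain ⟨F₀, hF₀, hv⟩ := aux_exists_facet C hC (hC.2.2.2.1 v)
    have hv' : v ∈ F₀ := hv rfl
    exact ⟨⟨F₀, hF₀⟩, ⟨v, hv', rfl⟩, aux_star C hC v ⟨F₀, hF₀⟩ hv'⟩⟩

lemma auxMap_bijective (hC : C.IsModel) : Function.Bijective (auxMap C hC) := by
  constructor
  · intro v v' h
    have h1 : C.χ v = C.χ v' := congrArg (fun u => u.1.1) h
    have h2 : {F : (LEMof C).W | v ∈ F.1} = {F : (LEMof C).W | v' ∈ F.1} :=
      congrArg (fun u => u.1.2) h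
    obtain ⟨F₀, hF₀, hv⟩ := aux_exists_facet C hC (hC.2.2.2.1 v)
    have hv' : v ∈ F₀ := hv rfl
    have hmem : (⟨F₀, hF₀⟩ : (LEMof C).W) ∈ {F : (LEMof C).W | v' ∈ F.1} := by
      rw [← h2]; exact hv'
    exact hC.2.2.2.2 F₀ hF₀.1 hv' hmem h1
  · intro u
    obtain ⟨w, ha, hS⟩ := u.2
    obtain ⟨v, hvw, hχ⟩ := ha
    refine ⟨v, Subtype.ext (Prod.ext hχ ?_)⟩
    rw [hS, ← hχ]
    exact aux_star C hC v w hvw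

end Aux

/-- every simplicial model `C` is isomorphic to `SC(LEM(C))` via the
map `v ↦ (χ(v), {F ∈ F(C) | v ∈ F})`. -/
theorem simp_iso_SC_LEM
    {Ag Pr : Type} [Fintype Ag] [Nonempty Ag] [DecidableEq Ag] [Countable Pr]
    (C : SimpModel Ag Pr) (hC : C.IsModel) :
    ∃ e : SIso C (SCof (LEMof C)),
      ∀ v : C.V,
        (e.toEquiv v).1 = (C.χ v, {F : (LEMof C).W | v ∈ F.1}) := by
  classical
  set f := auxMap C hC with hf
  have hbij := auxMap_bijective C hC
  refine ⟨⟨Equiv.ofBijective f hbij, ?_, ?_, ?_⟩, fun v => rfl⟩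
  · -- face_iff
    intro F
    constructor
    · intro hF
      have hFne : F.Nonempty := by
        rcases Set.eq_empty_or_nonempty F with h | h
        · exact absurd (h ▸ hF) hC.2.1
        · exact h
      obtain ⟨F₀, hF₀, hsub⟩ := aux_exists_facet C hC hF
      refine ⟨hFne.image _, ⟨F₀, hF₀⟩, ?_⟩
      rintro u ⟨v, hvF, rfl⟩
      refine ⟨⟨v, hsub hvF, rfl⟩, ?_⟩
      exact aux_star C hC v ⟨F₀, hF₀⟩ (hsub hvF)
    · rintro ⟨hne, w, hsub⟩
      have hFne : F.Nonempty := by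
        obtain ⟨u, v, hvF, _⟩ := hne
        exact ⟨v, hvF⟩
      have hFw : F ⊆ w.1 := by
        intro v hvF
        have hu := hsub ⟨v, hvF, rfl⟩
        obtain ⟨hδ, hRset⟩ := hu
        obtain ⟨x, hxw, hxχ⟩ := hδ
        have hRset' : {G : (LEMof C).W | v ∈ G.1}
            = {z : (LEMof C).W | C.χ v ∈ C.χ '' (w.1 ∩ z.1)} := hRset
        have : w ∈ {z : (LEMof C).W | C.χ v ∈ C.χ '' (w.1 ∩ z.1)} :=
          ⟨x, ⟨hxw, hxw⟩, hxχ⟩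
        rw [← hRset'] at this
        exact this
      exact hC.2.2.1 F w.1 hFne hFw w.2.1
  · -- χ_eq
    intro v; rfl
  · -- ℓ_iff
    intro p v
    constructor
    · rintro ⟨w, hρ, hS⟩
      obtain ⟨u, ⟨huw, huℓ⟩, hχ⟩ := hρ
      have hvw : v ∈ w.1 := by
        have hS' : {G : (LEMof C).W | v ∈ G.1}
            = {z : (LEMof C).W | C.χ v ∈ C.χ '' (w.1 ∩ z.1)} := hS
        have : w ∈ {z : (LEMof C).W | C.χ v ∈ C.χ '' (w.1 ∩ z.1)} :=
          ⟨u, ⟨huw, huw⟩, hχ⟩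
        rw [← hS'] at this
        exact this
      have : u = v := hC.2.2.2.2 w.1 w.2.1 huw hvw hχ
      exact this ▸ huℓ
    · intro hv
      obtain ⟨F₀, hF₀, hsub⟩ := aux_exists_facet C hC (hC.2.2.2.1 v)
      have hv' : v ∈ F₀ := hsub rfl
      exact ⟨⟨F₀, hF₀⟩, ⟨v, ⟨hv', hv⟩, rfl⟩, aux_star C hC v ⟨F₀, hF₀⟩ hv'⟩

end SimplicialEpistemic
end

section
/- For any local epistemic model M, the properization M^pr is isomorphic to LEM(SC(M)); explicitly, if [w]_δ=[v]_δ then F^M_w=F^M_v, and the well-defined map [w]_δ ↦ F^M_w is an isomorphism of first-order Kripke models from M^pr to LEM(SC(M)). In particular, every proper local epistemic model M is isomorphic to LEM(SC(M)). -/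
namespace SimplicialEpistemic

section Aux

variable {Ag Pr : Type} {M : KModel Ag Pr}

lemma rel_refl (hLEM : IsLEM M) {a : Ag} {w : M.W} (hw : a ∈ M.δ w) : M.R a w w :=
  (hLEM.1 a).refl ⟨w, hw⟩

lemma rel_symm (hLEM : IsLEM M) {a : Ag} {w v : M.W}
    (hw : a ∈ M.δ w) (hv : a ∈ M.δ v) (h : M.R a w v) : M.R a v w :=
  (hLEM.1 a).symm (x := ⟨w, hw⟩) (y := ⟨v, hv⟩) h

lemma rel_trans (hLEM : IsLEM M) {a : Ag} {w v x : M.W}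
    (hw : a ∈ M.δ w) (hv : a ∈ M.δ v) (hx : a ∈ M.δ x)
    (h1 : M.R a w v) (h2 : M.R a v x) : M.R a w x :=
  (hLEM.1 a).trans (x := ⟨w, hw⟩) (y := ⟨v, hv⟩) (z := ⟨x, hx⟩) h1 h2

lemma mem_cell_self (hLEM : IsLEM M) (w : M.W) : w ∈ cell M w :=
  fun _ ha => rel_refl hLEM ha

lemma delta_eq_of_mem_cell (hLEM : IsLEM M) {w v : M.W} (h : v ∈ cell M w) :
    M.δ v = M.δ w := by
  apply Set.Subset.antisymm (hLEM.2.2.2 w v h)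
  exact fun a ha => hLEM.2.1 a w v ha (h a ha)

lemma class_eq_of_rel (hLEM : IsLEM M) {a : Ag} {w v : M.W}
    (hw : a ∈ M.δ w) (h : M.R a w v) :
    {x : M.W | M.R a w x} = {x : M.W | M.R a v x} := by
  have hv : a ∈ M.δ v := hLEM.2.1 a w v hw h
  ext x
  constructor
  · intro hx
    have hxδ : a ∈ M.δ x := hLEM.2.1 a w x hw hx
    exact rel_trans hLEM hv hw hxδ (rel_symm hLEM hw hv h) hx
  · intro hx
    have hxδ : a ∈ M.δ x := hLEM.2.1 a v x hv hx
    exact rel_trans hLEM hw hv hxδ h hx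

lemma cell_eq_of_mem (hLEM : IsLEM M) {w v : M.W} (h : v ∈ cell M w) :
    cell M v = cell M w := by
  have hδ : M.δ v = M.δ w := delta_eq_of_mem_cell hLEM h
  ext x
  simp only [cell, Set.mem_setOf_eq]
  constructor
  · intro hx a ha
    have hc := class_eq_of_rel hLEM ha (h a ha)
    have hxv : M.R a v x := hx a (hδ ▸ ha)
    exact (Set.ext_iff.mp hc x).mpr hxv
  · intro hx a ha
    have ha' : a ∈ M.δ w := hδ ▸ ha
    have hc := class_eq_of_rel hLEM ha' (h a ha')
    exact (Set.ext_iff.mp hc x).mp (hx a ha')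

lemma rho_eq_of_mem_cell (hM : M.IsModel) (hLEM : IsLEM M) {w v : M.W}
    (h : v ∈ cell M w) (p : Pr) : M.ρ p v = M.ρ p w := by
  have hδ : M.δ v = M.δ w := delta_eq_of_mem_cell hLEM h
  ext a
  constructor
  · intro ha
    have hav : a ∈ M.δ v := hM.2.2.2 p v ha
    have haw : a ∈ M.δ w := hδ ▸ hav
    exact hLEM.2.2.1 p a v w ha (rel_symm hLEM haw hav (h a haw))
  · intro ha
    have haw : a ∈ M.δ w := hM.2.2.2 p w ha
    exact hLEM.2.2.1 p a w v ha (h a haw)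

lemma mem_cell_of_SCface_sub (hLEM : IsLEM M) {w v : M.W}
    (h : SCface M w ⊆ SCface M v) : v ∈ cell M w := by
  intro a ha
  have hu : (⟨(a, {x : M.W | M.R a w x}), ⟨w, ha, rfl⟩⟩ : SCVert M) ∈ SCface M w :=
    ⟨ha, rfl⟩
  obtain ⟨hav, hc⟩ := h hu
  have hc' : {x : M.W | M.R a w x} = {x : M.W | M.R a v x} := hc
  have hwv : v ∈ {x : M.W | M.R a v x} := rel_refl hLEM hav
  exact (Set.ext_iff.mp hc' v).mpr hwv

lemma SCface_eq_of_mem (hLEM : IsLEM M) {w v : M.W} (h : v ∈ cell M w) :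
    SCface M w = SCface M v := by
  have hδ : M.δ v = M.δ w := delta_eq_of_mem_cell hLEM h
  ext u
  constructor
  · rintro ⟨h1, h2⟩
    exact ⟨hδ ▸ h1, by rw [h2, class_eq_of_rel hLEM h1 (h _ h1)]⟩
  · rintro ⟨h1, h2⟩
    have h1' : u.1.1 ∈ M.δ w := hδ ▸ h1
    exact ⟨h1', by rw [h2, ← class_eq_of_rel hLEM h1' (h _ h1')]⟩

lemma chi_image_SCface (w : M.W) : (SCof M).χ '' SCface M w = M.δ w := by
  ext a
  constructor
  · rintro ⟨u, hu, rfl⟩; exact hu.1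
  · intro ha
    exact ⟨⟨(a, {x : M.W | M.R a w x}), ⟨w, ha, rfl⟩⟩, ⟨ha, rfl⟩, rfl⟩

lemma SCface_face (hM : M.IsModel) (w : M.W) : SCface M w ∈ (SCof M).faces := by
  obtain ⟨a, ha⟩ := hM.2.1 w
  exact ⟨⟨⟨(a, {x : M.W | M.R a w x}), ⟨w, ha, rfl⟩⟩, ⟨ha, rfl⟩⟩, w, subset_rfl⟩

lemma SCface_facet (hM : M.IsModel) (hLEM : IsLEM M) (w : M.W) :
    SCface M w ∈ (SCof M).facets := by
  refine ⟨SCface_face hM w, ?_⟩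
  intro G hG hsub
  obtain ⟨hGne, v, hGv⟩ := hG
  have hv : v ∈ cell M w := mem_cell_of_SCface_sub hLEM (hsub.trans hGv)
  have heq : SCface M w = SCface M v := SCface_eq_of_mem hLEM hv
  exact Set.Subset.antisymm hsub (by rw [heq]; exact hGv)

lemma facet_exists (hM : M.IsModel) {F : Set (SCVert M)}
    (hF : F ∈ (SCof M).facets) : ∃ w : M.W, F = SCface M w := by
  obtain ⟨⟨hne, w, hsub⟩, hmax⟩ := hF
  exact ⟨w, hmax (SCface M w) (SCface_face hM w) hsub⟩

lemma mem_chi_inter (hM : M.IsModel) (hLEM : IsLEM M) (a : Ag) (w v : M.W) :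
    a ∈ (SCof M).χ '' (SCface M w ∩ SCface M v) ↔ M.R a w v := by
  constructor
  · rintro ⟨u, ⟨⟨h1, h2⟩, ⟨h3, h4⟩⟩, rfl⟩
    have hc : {x : M.W | M.R u.1.1 w x} = {x : M.W | M.R u.1.1 v x} := by
      rw [← h2, h4]
    have hww : w ∈ {x : M.W | M.R u.1.1 w x} := rel_refl hLEM h1
    have hvw : M.R u.1.1 v w := (Set.ext_iff.mp hc w).mp hww
    exact rel_symm hLEM h3 h1 hvw
  · intro h
    have hw : a ∈ M.δ w := hM.2.2.1 a w v h
    have hv : a ∈ M.δ v := hLEM.2.1 a w v hw h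
    exact ⟨⟨(a, {x : M.W | M.R a w x}), ⟨w, hw, rfl⟩⟩,
      ⟨⟨hw, rfl⟩, ⟨hv, class_eq_of_rel hLEM hw h⟩⟩, rfl⟩

lemma chi_inter_ell (hM : M.IsModel) (hLEM : IsLEM M) (p : Pr) (w : M.W) :
    (SCof M).χ '' (SCface M w ∩ (SCof M).ℓ p) = M.ρ p w := by
  ext a
  constructor
  · rintro ⟨u, ⟨⟨h1, h2⟩, w₀, h3, h4⟩, rfl⟩
    have hδ₀ : u.1.1 ∈ M.δ w₀ := hM.2.2.2 p w₀ h3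
    have hc : {x : M.W | M.R u.1.1 w x} = {x : M.W | M.R u.1.1 w₀ x} := by
      rw [← h2, h4]
    have hww : w ∈ {x : M.W | M.R u.1.1 w x} := rel_refl hLEM h1
    have hw₀w : M.R u.1.1 w₀ w := (Set.ext_iff.mp hc w).mp hww
    exact hLEM.2.2.1 p u.1.1 w₀ w h3 hw₀w
  · intro ha
    have hw : a ∈ M.δ w := hM.2.2.2 p w ha
    exact ⟨⟨(a, {x : M.W | M.R a w x}), ⟨w, hw, rfl⟩⟩,
      ⟨⟨hw, rfl⟩, ⟨w, ha, rfl⟩⟩, rfl⟩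

lemma rel_congr_left (hM : M.IsModel) (hLEM : IsLEM M) {a : Ag} {w w' v : M.W}
    (h : cell M w = cell M w') (hr : M.R a w v) : M.R a w' v := by
  have hw : a ∈ M.δ w := hM.2.2.1 a w v hr
  have hw'cell : w' ∈ cell M w := h ▸ mem_cell_self hLEM w'
  have hww' : M.R a w w' := hw'cell a hw
  have hw' : a ∈ M.δ w' := hLEM.2.1 a w w' hw hww'
  have hv : a ∈ M.δ v := hLEM.2.1 a w v hw hr
  exact rel_trans hLEM hw' hw hv (rel_symm hLEM hw hw' hww') hr

lemma rel_congr_right (hM : M.IsModel) (hLEM : IsLEM M) {a : Ag} {w v v' : M.W}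
    (h : cell M v = cell M v') (hr : M.R a w v) : M.R a w v' := by
  have hw : a ∈ M.δ w := hM.2.2.1 a w v hr
  have hv : a ∈ M.δ v := hLEM.2.1 a w v hw hr
  have hv'cell : v' ∈ cell M v := h ▸ mem_cell_self hLEM v'
  have hvv' : M.R a v v' := hv'cell a hv
  have hv' : a ∈ M.δ v' := hLEM.2.1 a v v' hv hvv'
  exact rel_trans hLEM hw hv hv' hr hvv'

lemma SCface_choose (hLEM : IsLEM M) (S : (properize M).W) {w : M.W}
    (h : S.1 = cell M w) : SCface M S.2.choose = SCface M w := by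
  have hcc : cell M w = cell M S.2.choose := h.symm.trans S.2.choose_spec
  have hm : S.2.choose ∈ cell M w := by rw [hcc]; exact mem_cell_self hLEM _
  exact (SCface_eq_of_mem hLEM hm).symm

end Aux

/-- for any local epistemic model `M`, the properization `M^pr` is
isomorphic to `LEM(SC(M))` via the well-defined map `[w]_δ ↦ F^M_w`; in
particular any proper local epistemic model is isomorphic to `LEM(SC(M))`. -/
theorem properization_iso_LEM_SC
    {Ag Pr : Type} [Fintype Ag] [Nonempty Ag] [DecidableEq Ag] [Countable Pr]
    (M : KModel Ag Pr) (hM : M.IsModel) (hLEM : IsLEM M) :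
    (∀ w v : M.W, cell M w = cell M v → SCface M w = SCface M v) ∧
      (∃ e : KIso (properize M) (LEMof (SCof M)),
        ∀ w : M.W,
          ((e.toEquiv (⟨cell M w, ⟨w, rfl⟩⟩ : (properize M).W)).1 : Set (SCVert M))
            = SCface M w) ∧
      (Proper M → Nonempty (KIso M (LEMof (SCof M)))) := by
  refine ⟨fun w v h => SCface_eq_of_mem hLEM (h ▸ mem_cell_self hLEM v), ?_, ?_⟩
  · -- the isomorphism properize M ≃ LEM(SC(M))
    set f : (properize M).W → (LEMof (SCof M)).W :=
      fun S => ⟨SCface M S.2.choose, SCface_facet hM hLEM _⟩ with hf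
    have hbij : Function.Bijective f := by
      constructor
      · intro S T hST
        have h1 : SCface M S.2.choose = SCface M T.2.choose :=
          congrArg Subtype.val hST
        have h2 : T.2.choose ∈ cell M S.2.choose :=
          mem_cell_of_SCface_sub hLEM h1.le
        have h3 : cell M T.2.choose = cell M S.2.choose := cell_eq_of_mem hLEM h2
        apply Subtype.ext
        rw [S.2.choose_spec, T.2.choose_spec, h3]
      · rintro ⟨F, hF⟩
        obtain ⟨w, rfl⟩ := facet_exists hM hF
        refine ⟨⟨cell M w, ⟨w, rfl⟩⟩, ?_⟩
        apply Subtype.ext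
        exact SCface_choose hLEM _ rfl
    refine ⟨⟨Equiv.ofBijective f hbij, ?_, ?_, ?_⟩, ?_⟩
    · intro S
      show (SCof M).χ '' SCface M S.2.choose = M.δ S.2.choose
      exact chi_image_SCface _
    · intro a S T
      show a ∈ (SCof M).χ '' (SCface M S.2.choose ∩ SCface M T.2.choose) ↔ _
      rw [mem_chi_inter hM hLEM]
      constructor
      · intro h
        exact ⟨S.2.choose, T.2.choose, S.2.choose_spec, T.2.choose_spec, h⟩
      · rintro ⟨w, v, h1, h2, h⟩
        have hw : cell M w = cell M S.2.choose := h1.symm.trans S.2.choose_spec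
        have hv : cell M v = cell M T.2.choose := h2.symm.trans T.2.choose_spec
        exact rel_congr_right hM hLEM hv (rel_congr_left hM hLEM hw h)
    · intro p S
      show (SCof M).χ '' (SCface M S.2.choose ∩ (SCof M).ℓ p) = M.ρ p S.2.choose
      exact chi_inter_ell hM hLEM p _
    · intro w
      exact SCface_choose hLEM _ rfl
  · -- proper case
    intro hP
    set g : M.W → (LEMof (SCof M)).W :=
      fun w => ⟨SCface M w, SCface_facet hM hLEM w⟩ with hg
    have hbij : Function.Bijective g := by
      constructor
      · intro w v hwv
        have h1 : SCface M w = SCface M v := congrArg Subtype.val hwv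
        have h2 : v ∈ cell M w := mem_cell_of_SCface_sub hLEM h1.le
        have h3 : cell M v = cell M w := cell_eq_of_mem hLEM h2
        have h4 : ({v} : Set M.W) = {w} := by
          rw [← hP v, ← hP w]; exact h3
        exact (Set.singleton_eq_singleton_iff.mp h4).symm
      · rintro ⟨F, hF⟩
        obtain ⟨w, rfl⟩ := facet_exists hM hF
        exact ⟨w, rfl⟩
    refine ⟨⟨Equiv.ofBijective g hbij, ?_, ?_, ?_⟩⟩
    · intro w; exact chi_image_SCface w
    · intro a w v; exact mem_chi_inter hM hLEM a w v
    · intro p w; exact chi_inter_ell hM hLEM p w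

end SimplicialEpistemic
end

section
/- For any simplicial models C and D with facets F∈F(C) and G∈F(D): C,F and D,G are bisimilar (as pointed simplicial models) if and only if LEM(C),F and LEM(D),G are bisimilar (as pointed first-order Kripke models). -/
namespace SimplicialEpistemic

/-- pointed simplicial models are bisimilar iff their associated
pointed Kripke models under `LEM` are bisimilar. -/
theorem bisim_iff_LEM_bisim
    {Ag Pr : Type} [Fintype Ag] [Nonempty Ag] [DecidableEq Ag] [Countable Pr]
    (C D : SimpModel Ag Pr) (hC : C.IsModel) (hD : D.IsModel)
    (F : Set C.V) (G : Set D.V) (hF : F ∈ C.facets) (hG : G ∈ D.facets) :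
    (∃ Z, IsSBisim C D Z ∧ (F, G) ∈ Z) ↔
      (∃ Z, IsKBisim (LEMof C) (LEMof D) Z ∧
        ((⟨F, hF⟩ : (LEMof C).W), (⟨G, hG⟩ : (LEMof D).W)) ∈ Z) := by
  constructor
  · rintro ⟨Z, hZ, hFG⟩
    refine ⟨{q | (q.1.1, q.2.1) ∈ Z}, ?_, hFG⟩
    rintro ⟨F', hF'⟩ ⟨G', hG'⟩ hmem
    obtain ⟨⟨hinv1, hinv2⟩, hzig, hzag⟩ := hZ.2 F' G' hmem
    refine ⟨⟨hinv1, hinv2⟩, ?_, ?_⟩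
    · rintro As ⟨F'', hF''⟩ hR
      obtain ⟨G'', hG''mem, hsub, hZ''⟩ := hzig As F'' hF'' (fun a ha => hR a ha)
      exact ⟨⟨G'', hG''mem⟩, fun a ha => hsub ha, hZ''⟩
    · rintro As ⟨G'', hG''⟩ hR
      obtain ⟨F'', hF''mem, hsub, hZ''⟩ := hzag As G'' hG'' (fun a ha => hR a ha)
      exact ⟨⟨F'', hF''mem⟩, fun a ha => hsub ha, hZ''⟩
  · rintro ⟨Z, hZ, hFG⟩
    refine ⟨{q | ∃ (h1 : q.1 ∈ C.facets) (h2 : q.2 ∈ D.facets),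
      ((⟨q.1, h1⟩ : (LEMof C).W), (⟨q.2, h2⟩ : (LEMof D).W)) ∈ Z}, ?_, hF, hG, hFG⟩
    constructor
    · rintro q ⟨h1, h2, _⟩; exact ⟨h1, h2⟩
    · rintro F' G' ⟨h1, h2, hmem⟩
      obtain ⟨⟨hinv1, hinv2⟩, hzig, hzag⟩ := hZ _ _ hmem
      refine ⟨⟨hinv1, hinv2⟩, ?_, ?_⟩
      · intro As F'' hF'' hsub
        obtain ⟨v', hR, hZ''⟩ := hzig As ⟨F'', hF''⟩ (fun a ha => hsub ha)
        exact ⟨v'.1, v'.2, fun a ha => hR a ha, hF'', v'.2, hZ''⟩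
      · intro As G'' hG'' hsub
        obtain ⟨w', hR, hZ''⟩ := hzag As ⟨G'', hG''⟩ (fun a ha => hsub ha)
        exact ⟨w'.1, w'.2, fun a ha => hR a ha, w'.2, hG'', hZ''⟩

end SimplicialEpistemic
end

section
/- The following schemas are theorems of the proof system LEL: (R) [x:=a]φ ↔ [y:=a]φ[y/x], provided y does not occur in φ; (KPI) [x⃗:=a⃗](K_{x⃗}α → K_{x⃗}[x⃗:=a⃗]K_{x⃗}α); (ANI) [x:=a](¬p_x → K_x[x:=a]¬p_x). -/
/-
The assignment context `[x⃗:=a⃗]` is a normal modality (by `K^{:=}` and necessitation), and SUB with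
`y = x` together with TR makes it shift reflexive: `[x⃗:=a⃗]([x⃗:=a⃗]ψ → ψ)`. With T this gives
`[x⃗:=a⃗](K_X[x⃗:=a⃗]θ → θ)`. KNI says that under `[x⃗:=a⃗]` a negative knowledge formula `¬K_{x⃗}γ`
implies `K_{x⃗}[x⃗:=a⃗]¬K_{x⃗}γ`, and this transfers to every formula provably equivalent to it
there. Both `K_{x⃗}α` (equivalent to `¬K_{x⃗}[x⃗:=a⃗]¬K_{x⃗}α` by KNI and shift reflexivity) and
`¬p_x` (equivalent to `¬K_x[x:=a]p_x` by API and shift reflexivity) are such formulas, which gives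
KPI and ANI. R is TR followed by SUB, in both directions.
-/

namespace SimplicialEpistemic

namespace Formula

variable {Ag Xv Pr : Type} [DecidableEq Xv]

@[simp] theorem wf_impl {φ ψ : Formula Ag Xv Pr} : (impl φ ψ).Wf ↔ φ.Wf ∧ ψ.Wf := Iff.rfl

@[simp] theorem fv_impl {φ ψ : Formula Ag Xv Pr} : (impl φ ψ).FV = φ.FV ∪ ψ.FV := rfl

theorem notMem_fv_of_not_occurs {y : Xv} :
    ∀ {φ : Formula Ag Xv Pr}, ¬ occurs y φ → y ∉ φ.FV
  | atom _ _, h => by simpa [occurs, FV, eq_comm] using h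
  | top, _ => by simp [FV]
  | neg φ, h => notMem_fv_of_not_occurs (φ := φ) h
  | .and φ ψ, h => by
      simp only [occurs, not_or] at h
      simp [FV, notMem_fv_of_not_occurs h.1, notMem_fv_of_not_occurs h.2]
  | assign _ _ φ, h => by
      simp only [occurs, not_or] at h
      simp [FV, notMem_fv_of_not_occurs h.2]
  | know _ _, h => by simp only [occurs, not_or] at h; exact h.1

theorem wf_subst {x y : Xv} : ∀ {φ : Formula Ag Xv Pr}, φ.Wf → (subst x y φ).Wf
  | atom _ _, _ => trivial
  | top, _ => trivial
  | neg φ, h => wf_subst (φ := φ) h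
  | .and _ _, h => ⟨wf_subst h.1, wf_subst h.2⟩
  | assign z _ φ, h => by
      by_cases hz : z = x
      · simpa [subst, hz, Wf] using h
      · simpa [subst, hz, Wf] using wf_subst (x := x) (y := y) (φ := φ) h
  | know _ _, h => h

theorem subst_self {x : Xv} : ∀ φ : Formula Ag Xv Pr, subst x x φ = φ
  | atom p z => by by_cases h : z = x <;> simp [subst, h]
  | top => rfl
  | neg φ => by simp [subst, subst_self φ]
  | .and φ ψ => by simp [subst, subst_self φ, subst_self ψ]
  | assign z a φ => by by_cases h : z = x <;> simp [subst, h, subst_self φ]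
  | know X α => by
      simp only [subst, know.injEq, and_true]
      refine (Finset.image_congr fun z _ => ?_).trans Finset.image_id
      by_cases h : z = x <;> simp [h]

theorem adm_self {x : Xv} : ∀ φ : Formula Ag Xv Pr, Adm x x φ
  | atom _ _ => trivial
  | top => trivial
  | neg φ => adm_self φ
  | .and φ ψ => ⟨adm_self φ, adm_self ψ⟩
  | assign _ _ φ => or_iff_not_imp_left.2 fun h => Or.inr ⟨h, adm_self φ⟩
  | know _ _ => trivial

theorem adm_of_not_occurs {x y : Xv} :
    ∀ {φ : Formula Ag Xv Pr}, ¬ occurs y φ → Adm x y φ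
  | atom _ _, _ => trivial
  | top, _ => trivial
  | neg φ, h => adm_of_not_occurs (φ := φ) h
  | .and _ _, h => by
      simp only [occurs, not_or] at h
      exact ⟨adm_of_not_occurs h.1, adm_of_not_occurs h.2⟩
  | assign _ _ _, h => by
      simp only [occurs, not_or] at h
      exact Or.inr (Or.inr ⟨h.1, adm_of_not_occurs h.2⟩)
  | know _ _, _ => trivial

theorem subst_eq_self_of_not_occurs {x y : Xv} :
    ∀ {φ : Formula Ag Xv Pr}, ¬ occurs x φ → subst x y φ = φ
  | atom _ _, h => by simp_all [occurs, subst]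
  | top, _ => rfl
  | neg φ, h => by simp [subst, subst_eq_self_of_not_occurs (φ := φ) h]
  | .and _ _, h => by
      simp only [occurs, not_or] at h
      simp [subst, subst_eq_self_of_not_occurs h.1, subst_eq_self_of_not_occurs h.2]
  | assign _ _ _, h => by
      simp only [occurs, not_or] at h
      simp [subst, h.1, subst_eq_self_of_not_occurs h.2]
  | know X α, h => by
      simp only [occurs, not_or] at h
      have hX : X.image (fun z => if z = x then y else z) = X := by
        refine (Finset.image_congr fun z hz => ?_).trans Finset.image_id
        simp [show z ≠ x by rintro rfl; exact h.1 hz]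
      simp [subst, hX]

theorem subst_subst_of_not_occurs {x y : Xv} :
    ∀ {φ : Formula Ag Xv Pr}, ¬ occurs y φ → subst y x (subst x y φ) = φ
  | atom p z, h => by
      simp only [occurs] at h
      by_cases hz : z = x <;> simp [subst, hz, h]
  | top, _ => rfl
  | neg φ, h => by simp [subst, subst_subst_of_not_occurs (φ := φ) h]
  | .and _ _, h => by
      simp only [occurs, not_or] at h
      simp [subst, subst_subst_of_not_occurs h.1, subst_subst_of_not_occurs h.2]
  | assign z _ _, h => by
      simp only [occurs, not_or] at h
      by_cases hz : z = x
      · simp [subst, hz, subst_eq_self_of_not_occurs h.2]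
      · simp [subst, hz, h.1, subst_subst_of_not_occurs h.2]
  | know X α, h => by
      simp only [occurs, not_or] at h
      simp only [subst, Finset.image_image]
      congr 1
      refine (Finset.image_congr fun z hz => ?_).trans Finset.image_id
      have hzy : z ≠ y := by rintro rfl; exact h.1 hz
      by_cases hzx : z = x <;> simp [hzx, hzy]

theorem notMem_fv_subst {x y : Xv} (hxy : x ≠ y) :
    ∀ {φ : Formula Ag Xv Pr}, x ∉ (subst x y φ).FV
  | atom p z => by
      by_cases hz : z = x
      · simp [subst, FV, hz, hxy]
      · simp [subst, FV, hz, Ne.symm hz]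
  | top => by simp [subst, FV]
  | neg φ => notMem_fv_subst hxy (φ := φ)
  | .and φ ψ => by simp [subst, FV, notMem_fv_subst hxy]
  | assign z a φ => by by_cases hz : z = x <;> simp [subst, FV, hz, notMem_fv_subst hxy]
  | know X α => by
      simp only [subst, FV, Finset.mem_image, not_exists, not_and]
      intro z _
      split_ifs with h
      · exact Ne.symm hxy
      · exact h

theorem adm_subst {x y : Xv} :
    ∀ {φ : Formula Ag Xv Pr}, ¬ occurs y φ → Adm y x (subst x y φ)
  | atom _ _, _ => trivial
  | top, _ => trivial
  | neg φ, h => adm_subst (φ := φ) h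
  | .and _ _, h => by
      simp only [occurs, not_or] at h
      exact ⟨adm_subst h.1, adm_subst h.2⟩
  | assign z _ _, h => by
      simp only [occurs, not_or] at h
      by_cases hz : z = x
      · simp only [subst, if_pos hz]
        exact Or.inr (Or.inl (notMem_fv_of_not_occurs h.2))
      · simp only [subst, if_neg hz]
        exact Or.inr (Or.inr ⟨hz, adm_subst h.2⟩)
  | know _ _, _ => trivial

theorem wf_assigns : ∀ (xs : List Xv) (as : List Ag) {φ : Formula Ag Xv Pr},
    (assigns xs as φ).Wf ↔ φ.Wf
  | [], _, _ => Iff.rfl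
  | _ :: _, [], _ => Iff.rfl
  | _ :: xs, _ :: as, _ => wf_assigns xs as

theorem fv_assigns_subset : ∀ (xs : List Xv) (as : List Ag) {φ : Formula Ag Xv Pr},
    (assigns xs as φ).FV ⊆ φ.FV
  | [], _, _ => subset_rfl
  | _ :: _, [], _ => subset_rfl
  | _ :: xs, _ :: as, _ => Finset.sdiff_subset.trans (fv_assigns_subset xs as)

theorem fv_assigns : ∀ {xs : List Xv} {as : List Ag} {φ : Formula Ag Xv Pr},
    xs.length = as.length → (assigns xs as φ).FV = φ.FV \ xs.toFinset
  | [], [], _, _ => by simp [assigns]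
  | _ :: _, _ :: _, _, h => by
      rw [assigns, FV, fv_assigns (Nat.succ.inj h)]
      ext z
      simp only [Finset.mem_sdiff, Finset.mem_singleton, List.toFinset_cons, Finset.mem_insert]
      tauto

theorem sent_assigns {xs : List Xv} {as : List Ag} {φ : Formula Ag Xv Pr}
    (hlen : xs.length = as.length) (wφ : φ.Wf) (hfv : φ.FV ⊆ xs.toFinset) :
    Sent (assigns xs as φ) :=
  ⟨(wf_assigns xs as).2 wφ, by rw [fv_assigns hlen, Finset.sdiff_eq_empty_iff_subset]; exact hfv⟩

end Formula

namespace Formula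

variable {Ag Xv Pr : Type} (P Q R : Formula Ag Xv Pr)

theorem tautology_imp_self : Tautology (impl P P) := by
  intro v
  simp only [impl, propEval]
  cases propEval v P <;> rfl

theorem tautology_imp_trans : Tautology (impl (impl P Q) (impl (impl Q R) (impl P R))) := by
  intro v
  simp only [impl, propEval]
  cases propEval v P <;> cases propEval v Q <;> cases propEval v R <;> rfl

theorem tautology_mt : Tautology (impl (impl P Q) (impl (neg Q) (neg P))) := by
  intro v
  simp only [impl, propEval]
  cases propEval v P <;> cases propEval v Q <;> rfl

theorem tautology_imp_not_comm : Tautology (impl (impl P (neg Q)) (impl Q (neg P))) := by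
  intro v
  simp only [impl, propEval]
  cases propEval v P <;> cases propEval v Q <;> rfl

theorem tautology_not_imp_comm : Tautology (impl (impl (neg P) Q) (impl (neg Q) P)) := by
  intro v
  simp only [impl, propEval]
  cases propEval v P <;> cases propEval v Q <;> rfl

theorem tautology_fiff_intro : Tautology (impl (impl P Q) (impl (impl Q P) (fiff P Q))) := by
  intro v
  simp only [fiff, impl, propEval]
  cases propEval v P <;> cases propEval v Q <;> rfl

end Formula

open Formula

namespace LEL

variable {Ag Xv Pr : Type} [DecidableEq Xv] {xs : List Xv} {as : List Ag}
  {P Q R : Formula Ag Xv Pr}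

theorem imp_trans (hPQ : LEL (impl P Q)) (hQR : LEL (impl Q R))
    (wP : P.Wf) (wQ : Q.Wf) (wR : R.Wf) : LEL (impl P R) :=
  ((LEL.taut (by simp [*]) (tautology_imp_trans P Q R)).mp hPQ).mp hQR

theorem fiff_intro (hPQ : LEL (impl P Q)) (hQP : LEL (impl Q P)) (wP : P.Wf) (wQ : Q.Wf) :
    LEL (fiff P Q) :=
  ((LEL.taut (by simp [fiff, Wf, *]) (tautology_fiff_intro P Q)).mp hPQ).mp hQP

theorem assigns_nec : ∀ {xs : List Xv} {as : List Ag} {φ : Formula Ag Xv Pr},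
    LEL φ → LEL (assigns xs as φ)
  | [], _, _, h => h
  | _ :: _, [], _, h => h
  | _ :: _, _ :: _, _, h => LEL.necA (assigns_nec h)

theorem assigns_distrib : ∀ {xs : List Xv} {as : List Ag}, P.Wf → Q.Wf →
    LEL (impl (assigns xs as (impl P Q)) (impl (assigns xs as P) (assigns xs as Q)))
  | [], _, wP, wQ | _ :: _, [], wP, wQ =>
      LEL.taut (φ := impl (impl P Q) (impl P Q)) (by simp [*]) (tautology_imp_self _)
  | x :: xs, a :: as, wP, wQ => by
      have wAP := (wf_assigns xs as).2 wP
      have wAQ := (wf_assigns xs as).2 wQ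
      have wAPQ := (wf_assigns xs as (φ := impl P Q)).2 ⟨wP, wQ⟩
      exact imp_trans
        ((LEL.kasgn wAPQ (wf_impl.2 ⟨wAP, wAQ⟩)).mp (LEL.necA (assigns_distrib wP wQ)))
        (LEL.kasgn wAP wAQ) wAPQ (wf_impl.2 ⟨wAP, wAQ⟩) (wf_impl.2 ⟨wAP, wAQ⟩)

theorem assigns_mp (hPQ : LEL (assigns xs as (impl P Q))) (hP : LEL (assigns xs as P))
    (wP : P.Wf) (wQ : Q.Wf) : LEL (assigns xs as Q) :=
  ((assigns_distrib wP wQ).mp hPQ).mp hP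

theorem assigns_imp_trans (hPQ : LEL (assigns xs as (impl P Q)))
    (hQR : LEL (assigns xs as (impl Q R))) (wP : P.Wf) (wQ : Q.Wf) (wR : R.Wf) :
    LEL (assigns xs as (impl P R)) :=
  assigns_mp (assigns_mp (assigns_nec (LEL.taut (by simp [*]) (tautology_imp_trans P Q R))) hPQ
    (by simp [*]) (by simp [*])) hQR (by simp [*]) (by simp [*])

theorem assigns_mt (h : LEL (assigns xs as (impl P Q))) (wP : P.Wf) (wQ : Q.Wf) :
    LEL (assigns xs as (impl (neg Q) (neg P))) :=
  assigns_mp (assigns_nec (LEL.taut (by simp [Wf, *]) (tautology_mt P Q))) h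
    (by simp [*]) (by simp [Wf, *])

theorem assigns_imp_not_comm (h : LEL (assigns xs as (impl P (neg Q)))) (wP : P.Wf)
    (wQ : Q.Wf) : LEL (assigns xs as (impl Q (neg P))) :=
  assigns_mp (assigns_nec (LEL.taut (by simp [Wf, *]) (tautology_imp_not_comm P Q))) h
    (by simp [Wf, *]) (by simp [Wf, *])

theorem assigns_not_imp_comm (h : LEL (assigns xs as (impl (neg P) Q))) (wP : P.Wf)
    (wQ : Q.Wf) : LEL (assigns xs as (impl (neg Q) P)) :=
  assigns_mp (assigns_nec (LEL.taut (by simp [Wf, *]) (tautology_not_imp_comm P Q))) h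
    (by simp [Wf, *]) (by simp [Wf, *])

theorem know_mono {X : Finset Xv} (h : LEL (impl P Q)) (hP : Sent P) (hQ : Sent Q) :
    LEL (impl (know X P) (know X Q)) :=
  have hPQ : Sent (impl P Q) := ⟨⟨hP.1, hQ.1⟩, by simp [hP.2, hQ.2]⟩
  (LEL.kk hP hQ).mp ((LEL.mono (Finset.empty_subset X) hPQ).mp (LEL.necK hPQ h))

theorem imp_assigns_of_notMem_fv : ∀ {xs : List Xv} {as : List Ag} {φ : Formula Ag Xv Pr},
    φ.Wf → (∀ y ∈ xs, y ∉ φ.FV) → LEL (impl φ (assigns xs as φ))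
  | [], _, φ, wφ, _ | _ :: _, [], φ, wφ, _ =>
      LEL.taut (φ := impl φ φ) ⟨wφ, wφ⟩ (tautology_imp_self φ)
  | x :: _, _ :: _, _, wφ, h =>
      imp_trans (imp_assigns_of_notMem_fv wφ fun y hy => h y (List.mem_cons_of_mem x hy))
        (LEL.tr ((wf_assigns _ _).2 wφ) fun hx => h x List.mem_cons_self (fv_assigns_subset _ _ hx))
        wφ ((wf_assigns _ _).2 wφ) ((wf_assigns _ _).2 wφ)

theorem assign_shift_reflexive {x : Xv} {a : Ag} {φ : Formula Ag Xv Pr} (wφ : φ.Wf) :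
    LEL (assign x a (impl (assign x a φ) φ)) := by
  simpa only [subst_self] using LEL.sub (y := x) (a := a) wφ (adm_self φ)

theorem assigns_shift_reflexive : ∀ {xs : List Xv} {as : List Ag} {φ : Formula Ag Xv Pr},
    xs.length = as.length → φ.Wf → LEL (assigns xs as (impl (assigns xs as φ) φ))
  | [], [], φ, _, wφ => LEL.taut (φ := impl φ φ) ⟨wφ, wφ⟩ (tautology_imp_self φ)
  | x :: xs, a :: as, φ, hlen, wφ => by
      have hlen' : xs.length = as.length := Nat.succ.inj hlen
      have wAφ : (assigns xs as φ).Wf := (wf_assigns xs as).2 wφ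
      set χ := impl (assign x a (assigns xs as φ)) (assigns xs as φ)
      -- `[x:=a]χ` is SUB; TR moves `χ` under `[xs:=as]`, as no variable of `xs` is free in `χ`.
      have hχ : LEL (assign x a (assigns xs as χ)) := by
        refine assigns_mp (xs := [x]) (as := [a]) (P := χ)
          (LEL.necA (imp_assigns_of_notMem_fv ⟨wAφ, wAφ⟩ fun y hy => ?_))
          (assign_shift_reflexive wAφ) ⟨wAφ, wAφ⟩ ((wf_assigns xs as).2 ⟨wAφ, wAφ⟩)
        simp [χ, FV, fv_assigns hlen', hy]
      exact assigns_imp_trans (xs := x :: xs) (as := a :: as) hχ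
        (LEL.necA (assigns_shift_reflexive hlen' wφ)) wAφ wAφ wφ

theorem assign_imp_assign_subst {x y : Xv} {a : Ag} {φ : Formula Ag Xv Pr} (wφ : φ.Wf)
    (hy : y ∉ (assign x a φ).FV) (hadm : Adm x y φ) :
    LEL (impl (assign x a φ) (assign y a (subst x y φ))) :=
  imp_trans (LEL.tr (φ := assign x a φ) wφ hy)
    ((LEL.kasgn (φ := assign x a φ) wφ (wf_subst wφ)).mp (LEL.sub wφ hadm))
    wφ wφ (wf_subst wφ)

theorem assign_iff_assign_subst {x y : Xv} {a : Ag} {φ : Formula Ag Xv Pr} (wφ : φ.Wf)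
    (hy : ¬ occurs y φ) : LEL (fiff (assign x a φ) (assign y a (subst x y φ))) := by
  refine fiff_intro (assign_imp_assign_subst wφ ?_ (adm_of_not_occurs hy)) ?_ wφ (wf_subst wφ)
  · exact fun h => notMem_fv_of_not_occurs hy (Finset.mem_sdiff.1 h).1
  · have hx : x ∉ (assign y a (subst x y φ)).FV := by
      by_cases hxy : x = y
      · simp [FV, hxy]
      · exact fun h => notMem_fv_subst hxy (Finset.mem_sdiff.1 h).1
    simpa only [subst_subst_of_not_occurs hy] using
      assign_imp_assign_subst (wf_subst wφ) hx (adm_subst hy)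

theorem assigns_know_assigns_imp {X : Finset Xv} {θ : Formula Ag Xv Pr}
    (hlen : xs.length = as.length) (wθ : θ.Wf) (hθ : θ.FV ⊆ xs.toFinset) :
    LEL (assigns xs as (impl (know X (assigns xs as θ)) θ)) :=
  have hAθ := sent_assigns (as := as) hlen wθ hθ
  assigns_imp_trans (assigns_nec (LEL.tK hAθ)) (assigns_shift_reflexive hlen wθ) hAθ hAθ.1 wθ

theorem know_assigns_mono {X : Finset Xv} (h : LEL (assigns xs as (impl P Q)))
    (hlen : xs.length = as.length) (wP : P.Wf) (wQ : Q.Wf) (hP : P.FV ⊆ xs.toFinset)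
    (hQ : Q.FV ⊆ xs.toFinset) :
    LEL (assigns xs as (impl (know X (assigns xs as P)) (know X (assigns xs as Q)))) :=
  assigns_nec (know_mono ((assigns_distrib wP wQ).mp h)
    (sent_assigns hlen wP hP) (sent_assigns hlen wQ hQ))

theorem imp_know_assigns_of_equiv_not_know {γ φ : Formula Ag Xv Pr}
    (h₁ : LEL (assigns xs as (impl φ (neg (know xs.toFinset γ)))))
    (h₂ : LEL (assigns xs as (impl (neg (know xs.toFinset γ)) φ)))
    (hγ : Sent γ) (hnd : xs.Nodup) (hlen : xs.length = as.length) (wφ : φ.Wf)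
    (hφ : φ.FV ⊆ xs.toFinset) :
    LEL (assigns xs as (impl φ (know xs.toFinset (assigns xs as φ)))) :=
  have wKγ : (neg (know xs.toFinset γ)).Wf := hγ
  have hAKγ := sent_assigns (as := as) hlen wKγ subset_rfl
  assigns_imp_trans (assigns_imp_trans h₁ (LEL.kni hγ hnd hlen) wφ wKγ hAKγ)
    (know_assigns_mono h₂ hlen wKγ wφ subset_rfl hφ) wφ hAKγ (sent_assigns hlen wφ hφ)

theorem kpi {α : Formula Ag Xv Pr} (hα : Sent α) (hnd : xs.Nodup)
    (hlen : xs.length = as.length) :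
    LEL (assigns xs as (impl (know xs.toFinset α)
      (know xs.toFinset (assigns xs as (know xs.toFinset α))))) := by
  set Kα : Formula Ag Xv Pr := know xs.toFinset α
  have wKα : Kα.Wf := hα
  -- `β := [x⃗:=a⃗]¬K_{x⃗}α`; KNI for `α` says `¬K_{x⃗}α → K_{x⃗}β`.
  have hβ : Sent (assigns xs as (neg Kα)) := sent_assigns hlen wKα subset_rfl
  exact imp_know_assigns_of_equiv_not_know
    (assigns_imp_not_comm (assigns_know_assigns_imp hlen wKα subset_rfl) hβ wKα)
    (assigns_not_imp_comm (LEL.kni hα hnd hlen) wKα hβ) hβ hnd hlen wKα subset_rfl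

theorem ani {x : Xv} {a : Ag} {p : Pr} :
    LEL (assign x a (impl (neg (atom p x)) (know {x} (assign x a (neg (atom p x)))))) := by
  have hx : [x].toFinset = {x} := by simp
  have wq : (atom p x : Formula Ag Xv Pr).Wf := trivial
  have hγ : Sent (assign x a (atom p x) : Formula Ag Xv Pr) := ⟨wq, by simp [FV]⟩
  have h₁ := assigns_mt (xs := [x]) (as := [a]) (P := know [x].toFinset (assign x a (atom p x)))
    (assigns_know_assigns_imp rfl wq (by simp [FV])) hγ wq
  have h₂ := assigns_mt (xs := [x]) (as := [a]) (Q := know [x].toFinset (assign x a (atom p x)))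
    (hx ▸ LEL.api) wq hγ
  simpa only [hx, assigns] using imp_know_assigns_of_equiv_not_know (φ := neg (atom p x))
    h₁ h₂ hγ (List.nodup_singleton x) rfl wq (by simp [FV])

end LEL

theorem lel_R_KPI_ANI_general
    {Ag Xv Pr : Type} [DecidableEq Xv] :
    (∀ (x y : Xv) (a : Ag) (φ : Formula Ag Xv Pr),
        Formula.Wf φ → ¬ Formula.occurs y φ →
        LEL (Formula.fiff (.assign x a φ) (.assign y a (Formula.subst x y φ)))) ∧
    (∀ (xs : List Xv) (as : List Ag) (α : Formula Ag Xv Pr),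
        xs.Nodup → xs.length = as.length → Formula.Sent α →
        LEL (Formula.assigns xs as
          (Formula.impl (.know xs.toFinset α)
            (.know xs.toFinset (Formula.assigns xs as (.know xs.toFinset α)))))) ∧
    (∀ (x : Xv) (a : Ag) (p : Pr),
        LEL (.assign x a (Formula.impl (.neg (.atom p x))
          (.know {x} (.assign x a (.neg (.atom p x))))))) :=
  ⟨fun _ _ _ _ wφ hy => LEL.assign_iff_assign_subst wφ hy,
    fun _ _ _ hnd hlen hα => LEL.kpi hα hnd hlen,
    fun _ _ _ => LEL.ani⟩

/-- the schemas R, KPI and ANI are theorems of LEL. -/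
theorem lel_R_KPI_ANI
    {Ag Xv Pr : Type} [Fintype Ag] [Nonempty Ag] [DecidableEq Ag]
    [DecidableEq Xv] [Countable Xv] [Infinite Xv] [Countable Pr] :
    (∀ (x y : Xv) (a : Ag) (φ : Formula Ag Xv Pr),
        Formula.Wf φ → ¬ Formula.occurs y φ →
        LEL (Formula.fiff (.assign x a φ) (.assign y a (Formula.subst x y φ)))) ∧
    (∀ (xs : List Xv) (as : List Ag) (α : Formula Ag Xv Pr),
        xs.Nodup → xs.length = as.length → Formula.Sent α →
        LEL (Formula.assigns xs as
          (Formula.impl (.know xs.toFinset α)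
            (.know xs.toFinset (Formula.assigns xs as (.know xs.toFinset α)))))) ∧
    (∀ (x : Xv) (a : Ag) (p : Pr),
        LEL (.assign x a (Formula.impl (.neg (.atom p x))
          (.know {x} (.assign x a (.neg (.atom p x))))))) :=
  lel_R_KPI_ANI_general

end SimplicialEpistemic
end
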